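/- arXiv:1707.04955 — 3 statements merged into one kernel-verified Lean document; each statement's English description precedes it below -/
import Mathlib

section
/- For every λ > 0, in the extended nonnegative reals: ∫_0^∞ e^{−λ s} ( ∫_{{z : ⟨1,z⟩ ≤ e^{λ s}}} ⟨1,z⟩² μ(dz) ) ds = (1/λ) ( ∫_{{⟨1,z⟩ ≤ 1}} ⟨1,z⟩² μ(dz) + ∫_{{⟨1,z⟩ > 1}} ⟨1,z⟩ μ(dz) ). In particular, the left-hand side is finite whenever ∫_{{⟨1,z⟩ ≤ 1}} ⟨1,z⟩² μ(dz) < ∞ and ∫_{{⟨1,z⟩ > 1}} ⟨1,z⟩ μ(dz) < ∞. -/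
/-!
By Tonelli, the left side is `∫ x² w(x) ν(dx)` for `ν` the image of `μ` under `z ↦ ⟨1,z⟩`, where
`w(x) = ∫_{s ≥ 0, e^{λs} ≥ x} e^{-λs} ds` equals `1/λ` for `x ≤ 1` and `1/(λx)` for `x > 1`.
Since `μ` need not be s-finite, the exchange is only made where it is needed: the mass of `ν` on
`(-∞, 1]` lies below every threshold `e^{λs}` and contributes `(1/λ) ∫_{x ≤ 1} x² ν(dx)`
directly, and on `(1, ∞)` either `ν` is finite on every `(1, n]`, hence σ-finite, or some
`(1, n]` carries infinite mass and both sides are infinite.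
-/

open MeasureTheory Set Real
open scoped ENNReal

section

variable {lam : ℝ} {ν : Measure ℝ}

lemma lintegral_Ici_exp_neg_mul (hlam : 0 < lam) (c : ℝ) :
    ∫⁻ s in Ici c, ENNReal.ofReal (exp (-lam * s)) = ENNReal.ofReal (exp (-lam * c) / lam) := by
  have hneg : -lam < 0 := neg_lt_zero.2 hlam
  rw [← Measure.restrict_congr_set Ioi_ae_eq_Ici, ← ofReal_integral_eq_lintegral_ofReal
    (integrableOn_exp_mul_Ioi hneg c) (ae_of_all _ fun _ => (exp_pos _).le),
    integral_exp_mul_Ioi hneg c, neg_div_neg_eq]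

lemma setOf_le_exp_mul_eq_Ici (hlam : 0 < lam) {x : ℝ} (hx : 0 < x) :
    {s : ℝ | x ≤ exp (lam * s)} = Ici (log x / lam) := by
  ext s
  rw [mem_ofPred_eq, mem_Ici, ← log_le_iff_le_exp hx, div_le_iff₀ hlam, mul_comm]

lemma setLIntegral_exp_neg_mul_setOf_le_exp_mul (hlam : 0 < lam) {x : ℝ} (hx : 0 < x) :
    ∫⁻ s in {s : ℝ | x ≤ exp (lam * s)}, ENNReal.ofReal (exp (-lam * s)) =
      ENNReal.ofReal (x⁻¹ / lam) := by
  rw [setOf_le_exp_mul_eq_Ici hlam hx, lintegral_Ici_exp_neg_mul hlam, neg_mul,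
    mul_div_cancel₀ _ hlam.ne', exp_neg, exp_log hx]

lemma lintegral_exp_neg_mul_setLIntegral_Iic_exp_of_sFinite [SFinite ν] (hlam : 0 < lam)
    (hν : ∀ᵐ x ∂ν, 1 < x) :
    ∫⁻ s in Ici 0, ENNReal.ofReal (exp (-lam * s)) *
        ∫⁻ x in Iic (exp (lam * s)), ENNReal.ofReal (x ^ 2) ∂ν =
      ENNReal.ofReal (1 / lam) * ∫⁻ x, ENNReal.ofReal x ∂ν := by
  set S : Set (ℝ × ℝ) := {p | p.2 ≤ exp (lam * p.1)}
  set F : ℝ × ℝ → ℝ≥0∞ := fun p => ENNReal.ofReal (exp (-lam * p.1)) * ENNReal.ofReal (p.2 ^ 2)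
  have hS : MeasurableSet S := measurableSet_le measurable_snd (by fun_prop)
  have hF : Measurable (S.indicator F) := (by fun_prop : Measurable F).indicator hS
  have hweight : ∀ x, 1 < x → ∫⁻ s in Ici 0, S.indicator F (s, x) =
      ENNReal.ofReal (1 / lam) * ENNReal.ofReal x := by
    intro x hx
    have hx0 : 0 < x := one_pos.trans hx
    have hsub : {s : ℝ | x ≤ exp (lam * s)} ⊆ Ici 0 := by
      rw [setOf_le_exp_mul_eq_Ici hlam hx0]
      exact Ici_subset_Ici.2 (div_nonneg (log_nonneg hx.le) hlam.le)
    change ∫⁻ s in Ici 0, {s : ℝ | x ≤ exp (lam * s)}.indicator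
      (fun s => ENNReal.ofReal (exp (-lam * s)) * ENNReal.ofReal (x ^ 2)) s = _
    rw [lintegral_indicator (measurableSet_le measurable_const (by fun_prop)),
      Measure.restrict_restrict (measurableSet_le measurable_const (by fun_prop)),
      inter_eq_left.2 hsub, lintegral_mul_const _ (by fun_prop),
      setLIntegral_exp_neg_mul_setOf_le_exp_mul hlam hx0, ← ENNReal.ofReal_mul (by positivity),
      ← ENNReal.ofReal_mul (by positivity)]
    congr 1
    field_simp
  calc ∫⁻ s in Ici 0, ENNReal.ofReal (exp (-lam * s)) *
        ∫⁻ x in Iic (exp (lam * s)), ENNReal.ofReal (x ^ 2) ∂ν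
      = ∫⁻ s in Ici 0, ∫⁻ x, S.indicator F (s, x) ∂ν := by
        refine lintegral_congr fun s => ?_
        rw [← lintegral_const_mul _ (by fun_prop), ← lintegral_indicator measurableSet_Iic]
        rfl
    _ = ∫⁻ x, (∫⁻ s in Ici 0, S.indicator F (s, x)) ∂ν :=
        lintegral_lintegral_swap hF.aemeasurable
    _ = ∫⁻ x, ENNReal.ofReal (1 / lam) * ENNReal.ofReal x ∂ν :=
        lintegral_congr_ae (hν.mono hweight)
    _ = ENNReal.ofReal (1 / lam) * ∫⁻ x, ENNReal.ofReal x ∂ν :=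
        lintegral_const_mul _ (by fun_prop)

lemma lintegral_exp_neg_mul_setLIntegral_Iic_exp_of_one_lt (hlam : 0 < lam)
    (hν : ∀ᵐ x ∂ν, 1 < x) :
    ∫⁻ s in Ici 0, ENNReal.ofReal (exp (-lam * s)) *
        ∫⁻ x in Iic (exp (lam * s)), ENNReal.ofReal (x ^ 2) ∂ν =
      ENNReal.ofReal (1 / lam) * ∫⁻ x, ENNReal.ofReal x ∂ν := by
  by_cases hfin : ∀ n : ℕ, ν (Iic n) ≠ ∞
  · have : SigmaFinite ν := ⟨⟨⟨fun n => Iic (n : ℝ), fun _ => trivial, fun n => (hfin n).lt_top,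
      eq_univ_of_forall fun x => mem_iUnion.2 (exists_nat_ge x)⟩⟩⟩
    exact lintegral_exp_neg_mul_setLIntegral_Iic_exp_of_sFinite hlam hν
  push Not at hfin
  obtain ⟨n, hn⟩ := hfin
  have hmass : ∀ {t : Set ℝ} {f : ℝ → ℝ≥0∞}, MeasurableSet t → Iic (n : ℝ) ⊆ t →
      (∀ x, 1 < x → 1 ≤ f x) → ∫⁻ x in t, f x ∂ν = ∞ := by
    intro t f ht hnt hf
    refine top_unique ?_
    calc ∞ = ν (Iic n) := hn.symm
      _ ≤ ν t := measure_mono hnt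
      _ = ∫⁻ _ in t, 1 ∂ν := (setLIntegral_one t).symm
      _ ≤ ∫⁻ x in t, f x ∂ν := lintegral_mono_ae ((ae_restrict_of_ae hν).mono fun x hx => hf x hx)
  have hB : ∫⁻ x, ENNReal.ofReal x ∂ν = ∞ := by
    simpa using hmass MeasurableSet.univ (subset_univ _) fun x hx => ENNReal.one_le_ofReal.2 hx.le
  have hI : ∀ s ∈ Ici (n / lam), ENNReal.ofReal (exp (-lam * s)) *
      ∫⁻ x in Iic (exp (lam * s)), ENNReal.ofReal (x ^ 2) ∂ν = ∞ := by
    intro s hs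
    have hns : (n : ℝ) ≤ exp (lam * s) := by
      have := (div_le_iff₀ hlam).1 hs
      linarith [add_one_le_exp (lam * s)]
    rw [hmass measurableSet_Iic (Iic_subset_Iic.2 hns)
      fun x hx => ENNReal.one_le_ofReal.2 (one_le_pow₀ hx.le), ENNReal.mul_top (by positivity)]
  rw [hB, ENNReal.mul_top (by positivity)]
  refine top_unique ?_
  calc ∞ = ∫⁻ s in Ici (n / lam), ∞ := by simp
    _ = ∫⁻ s in Ici (n / lam), ENNReal.ofReal (exp (-lam * s)) *
          ∫⁻ x in Iic (exp (lam * s)), ENNReal.ofReal (x ^ 2) ∂ν :=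
        (setLIntegral_congr_fun measurableSet_Ici hI).symm
    _ ≤ _ := lintegral_mono_set (Ici_subset_Ici.2 (by positivity))

end

lemma lintegral_exp_neg_mul_setLIntegral_Iic_exp {lam : ℝ} (hlam : 0 < lam) (ν : Measure ℝ) :
    ∫⁻ s in Ici 0, ENNReal.ofReal (exp (-lam * s)) *
        ∫⁻ x in Iic (exp (lam * s)), ENNReal.ofReal (x ^ 2) ∂ν =
      ENNReal.ofReal (1 / lam) * (∫⁻ x in Iic 1, ENNReal.ofReal (x ^ 2) ∂ν +
        ∫⁻ x in Ioi 1, ENNReal.ofReal x ∂ν) := by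
  have hsplit : ∀ s ∈ Ici (0 : ℝ), ∫⁻ x in Iic (exp (lam * s)), ENNReal.ofReal (x ^ 2) ∂ν =
      ∫⁻ x in Iic 1, ENNReal.ofReal (x ^ 2) ∂ν +
        ∫⁻ x in Iic (exp (lam * s)), ENNReal.ofReal (x ^ 2) ∂ν.restrict (Ioi 1) := by
    intro s hs
    have hexp : 1 ≤ exp (lam * s) := one_le_exp (mul_nonneg hlam.le hs)
    rw [← lintegral_inter_add_sdiff _ _ measurableSet_Iic, Iic_inter_Iic, min_eq_right hexp,
      Measure.restrict_restrict measurableSet_Iic, sdiff_eq, compl_Iic]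
  rw [setLIntegral_congr_fun measurableSet_Ici fun s hs => by rw [hsplit s hs, mul_add],
    lintegral_add_left (by fun_prop), lintegral_mul_const _ (by fun_prop),
    lintegral_Ici_exp_neg_mul hlam, lintegral_exp_neg_mul_setLIntegral_Iic_exp_of_one_lt hlam
      (ν := ν.restrict (Ioi 1)) (ae_restrict_mem measurableSet_Ioi), mul_zero, exp_zero,
    mul_add, mul_comm]

theorem smalljump_integral_eq_general
    {d : ℕ} (μ : Measure (Fin d → ℝ))
    (lam : ℝ) (hlam : 0 < lam) :
    (∫⁻ s in Set.Ici (0 : ℝ), ENNReal.ofReal (Real.exp (-lam * s)) *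
        ∫⁻ z in {z : Fin d → ℝ | (∑ j, z j) ≤ Real.exp (lam * s)},
          ENNReal.ofReal ((∑ j, z j) ^ 2) ∂μ) =
      ENNReal.ofReal (1 / lam) *
        ((∫⁻ z in {z : Fin d → ℝ | (∑ j, z j) ≤ 1}, ENNReal.ofReal ((∑ j, z j) ^ 2) ∂μ) +
          ∫⁻ z in {z : Fin d → ℝ | 1 < (∑ j, z j)}, ENNReal.ofReal (∑ j, z j) ∂μ) ∧
    (((∫⁻ z in {z : Fin d → ℝ | (∑ j, z j) ≤ 1}, ENNReal.ofReal ((∑ j, z j) ^ 2) ∂μ) < ⊤ ∧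
        (∫⁻ z in {z : Fin d → ℝ | 1 < (∑ j, z j)}, ENNReal.ofReal (∑ j, z j) ∂μ) < ⊤) →
      (∫⁻ s in Set.Ici (0 : ℝ), ENNReal.ofReal (Real.exp (-lam * s)) *
        ∫⁻ z in {z : Fin d → ℝ | (∑ j, z j) ≤ Real.exp (lam * s)},
          ENNReal.ofReal ((∑ j, z j) ^ 2) ∂μ) < ⊤) := by
  have hsum : Measurable fun z : Fin d → ℝ => ∑ j, z j := by fun_prop
  have key := lintegral_exp_neg_mul_setLIntegral_Iic_exp hlam (μ.map fun z => ∑ j, z j)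
  simp only [setLIntegral_map (f := fun x : ℝ => ENNReal.ofReal (x ^ 2)) measurableSet_Iic
      (by fun_prop) hsum, setLIntegral_map (f := ENNReal.ofReal) measurableSet_Ioi
      (by fun_prop) hsum] at key
  exact ⟨key, fun hfin =>
    key.trans_lt (ENNReal.mul_lt_top ENNReal.ofReal_lt_top (ENNReal.add_lt_top.2 hfin))⟩

/-- **Small-jump integral computation (Kyprianou–Palau–Ren, Section 2.1).** For a measure `μ`
carried by `ℝ₊^d` and `λ > 0`,
`∫_0^∞ e^{-λs} ∫_{⟨1,z⟩ ≤ e^{λs}} ⟨1,z⟩² μ(dz) ds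
  = (1/λ)(∫_{⟨1,z⟩ ≤ 1} ⟨1,z⟩² μ(dz) + ∫_{⟨1,z⟩ > 1} ⟨1,z⟩ μ(dz))` in `[0,∞]`. -/
theorem smalljump_integral_eq
    {d : ℕ} (hd : 0 < d) (μ : Measure (Fin d → ℝ))
    (hμ : μ {z | ¬ ∀ i, 0 ≤ z i} = 0)
    (lam : ℝ) (hlam : 0 < lam) :
    (∫⁻ s in Set.Ici (0 : ℝ), ENNReal.ofReal (Real.exp (-lam * s)) *
        ∫⁻ z in {z : Fin d → ℝ | (∑ j, z j) ≤ Real.exp (lam * s)},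
          ENNReal.ofReal ((∑ j, z j) ^ 2) ∂μ) =
      ENNReal.ofReal (1 / lam) *
        ((∫⁻ z in {z : Fin d → ℝ | (∑ j, z j) ≤ 1}, ENNReal.ofReal ((∑ j, z j) ^ 2) ∂μ) +
          ∫⁻ z in {z : Fin d → ℝ | 1 < (∑ j, z j)}, ENNReal.ofReal (∑ j, z j) ∂μ) ∧
    (((∫⁻ z in {z : Fin d → ℝ | (∑ j, z j) ≤ 1}, ENNReal.ofReal ((∑ j, z j) ^ 2) ∂μ) < ⊤ ∧
        (∫⁻ z in {z : Fin d → ℝ | 1 < (∑ j, z j)}, ENNReal.ofReal (∑ j, z j) ∂μ) < ⊤) →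
      (∫⁻ s in Set.Ici (0 : ℝ), ENNReal.ofReal (Real.exp (-lam * s)) *
        ∫⁻ z in {z : Fin d → ℝ | (∑ j, z j) ≤ Real.exp (lam * s)},
          ENNReal.ofReal ((∑ j, z j) ^ 2) ∂μ) < ⊤) :=
  smalljump_integral_eq_general μ lam hlam
end

section
/- For every λ > 0, in the extended nonnegative reals: ∫_0^∞ ∫_{ℝ₊^d} u e^{−λ u} ⟨1,z⟩² 1_{{⟨1,z⟩ ≤ e^{λ u}}} μ(dz) du = (1/λ²) ( ∫_{{⟨1,z⟩ ≤ 1}} ⟨1,z⟩² μ(dz) + ∫_{{⟨1,z⟩ > 1}} ⟨1,z⟩ ( ln⟨1,z⟩ + 1 ) μ(dz) ). In particular, the left-hand side is finite whenever ∫_{{⟨1,z⟩ ≤ 1}} ⟨1,z⟩² μ(dz) < ∞ and ∫_{{⟨1,z⟩ > 1}} ⟨1,z⟩ ln⟨1,z⟩ μ(dz) < ∞ and ∫_{{⟨1,z⟩ > 1}} ⟨1,z⟩ μ(dz) < ∞. -/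
/-!
Swap the two integrals. For fixed `z` with `s = ⟨1,z⟩`, the `u`-integral runs over
`u ≥ log⁺ s / λ` and equals `expTail λ (log⁺ s / λ)`, which is `1/λ²` for `s ≤ 1` and
`(ln s + 1)/(s λ²)` for `s > 1`; multiplying by `s²` gives the right-hand side.
As `μ` need not be s-finite, the swap is not Tonelli's theorem but the layer-cake formula for
the measure `s² μ(dz)`, followed by the substitution `t = expTail λ u`.
-/

open MeasureTheory Filter Topology Set
open scoped ENNReal

/-- `expTail lam u = ∫_u^∞ s e^{-lam s} ds` for `0 < lam`. -/
noncomputable def expTail (lam u : ℝ) : ℝ := Real.exp (-lam * u) * (lam * u + 1) / lam ^ 2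

section expTail

variable {lam : ℝ}

lemma expTail_zero : expTail lam 0 = 1 / lam ^ 2 := by simp [expTail]

@[fun_prop]
lemma continuous_expTail : Continuous (expTail lam) := by unfold expTail; fun_prop

lemma hasDerivAt_expTail (hlam : lam ≠ 0) (u : ℝ) :
    HasDerivAt (expTail lam) (-(u * Real.exp (-lam * u))) u := by
  refine ((((hasDerivAt_id' u).const_mul (-lam)).exp.mul
    (((hasDerivAt_id' u).const_mul lam).add_const 1)).div_const (lam ^ 2)).congr_deriv ?_
  field_simp
  ring

lemma expTail_pos (hlam : 0 < lam) {u : ℝ} (hu : 0 ≤ u) : 0 < expTail lam u := by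
  unfold expTail; positivity

lemma strictAntiOn_expTail (hlam : 0 < lam) : StrictAntiOn (expTail lam) (Ici 0) := by
  refine strictAntiOn_of_deriv_neg (convex_Ici 0) continuous_expTail.continuousOn fun u hu => ?_
  rw [interior_Ici] at hu
  rw [(hasDerivAt_expTail hlam.ne' u).deriv, neg_lt_zero]
  exact mul_pos hu (Real.exp_pos _)

lemma tendsto_expTail_atTop (hlam : 0 < lam) : Tendsto (expTail lam) atTop (𝓝 0) := by
  have h : Tendsto (fun x => (x * Real.exp (-x) + Real.exp (-x)) / lam ^ 2) atTop (𝓝 0) := by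
    simpa using ((Real.tendsto_pow_mul_exp_neg_atTop_nhds_zero 1).add
      Real.tendsto_exp_neg_atTop_nhds_zero).div_const (lam ^ 2)
  refine (h.comp (tendsto_id.const_mul_atTop hlam)).congr fun u => ?_
  simp only [expTail, Function.comp_apply, id, neg_mul]
  ring

lemma image_expTail_Ici (hlam : 0 < lam) : expTail lam '' Ici 0 = Ioc 0 (1 / lam ^ 2) := by
  refine Subset.antisymm ?_ fun t ht => ?_
  · rintro _ ⟨u, hu, rfl⟩
    exact ⟨expTail_pos hlam hu,
      expTail_zero (lam := lam) ▸ (strictAntiOn_expTail hlam).antitoneOn self_mem_Ici hu hu⟩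
  · obtain ⟨u, hu, hu0⟩ :=
      (((tendsto_expTail_atTop hlam).eventually_lt_const ht.1).and (eventually_ge_atTop 0)).exists
    obtain ⟨v, hv, rfl⟩ := intermediate_value_Icc' hu0 continuous_expTail.continuousOn
      ⟨hu.le, expTail_zero (lam := lam) ▸ ht.2⟩
    exact ⟨v, hv.1, rfl⟩

lemma expTail_log_div (hlam : lam ≠ 0) {s : ℝ} (hs : 0 < s) :
    expTail lam (Real.log s / lam) = (Real.log s + 1) / (s * lam ^ 2) := by
  rw [expTail, mul_div_cancel₀ _ hlam, neg_mul, mul_div_cancel₀ _ hlam, Real.exp_neg,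
    Real.exp_log hs]
  field_simp

lemma expTail_le_expTail_log_max_iff (hlam : 0 < lam) {u s : ℝ} (hu : 0 ≤ u) :
    expTail lam u ≤ expTail lam (Real.log (max 1 s) / lam) ↔ s ≤ Real.exp (lam * u) := by
  have ha : 0 ≤ Real.log (max 1 s) / lam :=
    div_nonneg (Real.log_nonneg (le_max_left _ _)) hlam.le
  rw [(strictAntiOn_expTail hlam).le_iff_ge hu ha, div_le_iff₀ hlam, mul_comm,
    Real.log_le_iff_le_exp (by positivity), max_le_iff]
  exact and_iff_right (Real.one_le_exp (by positivity))

lemma sq_mul_expTail_log_max_of_le_one {s : ℝ} (hs : s ≤ 1) :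
    s ^ 2 * expTail lam (Real.log (max 1 s) / lam) = 1 / lam ^ 2 * s ^ 2 := by
  rw [max_eq_left hs, Real.log_one, zero_div, expTail_zero, mul_comm]

lemma sq_mul_expTail_log_max_of_one_lt (hlam : lam ≠ 0) {s : ℝ} (hs : 1 < s) :
    s ^ 2 * expTail lam (Real.log (max 1 s) / lam) = 1 / lam ^ 2 * (s * (Real.log s + 1)) := by
  rw [max_eq_right hs.le, expTail_log_div hlam (by linarith)]
  field_simp

end expTail

section Measure

variable {α : Type*} [MeasurableSpace α] {lam : ℝ}

lemma setLIntegral_Ioc_expTail_eq (hlam : 0 < lam) (g : ℝ → ℝ≥0∞) :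
    ∫⁻ t in Ioc 0 (1 / lam ^ 2), g t =
      ∫⁻ u in Ici 0, ENNReal.ofReal (u * Real.exp (-lam * u)) * g (expTail lam u) := by
  rw [← image_expTail_Ici hlam, lintegral_image_eq_lintegral_abs_deriv_mul measurableSet_Ici
    (fun u _ => (hasDerivAt_expTail hlam.ne' u).hasDerivWithinAt)
    (strictAntiOn_expTail hlam).injOn]
  refine setLIntegral_congr_fun measurableSet_Ici fun u (hu : 0 ≤ u) => ?_
  rw [abs_neg, abs_of_nonneg (by positivity)]

lemma lintegral_expTail_log_max_eq (ν : Measure α) {S : α → ℝ} (hS : Measurable S)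
    (hlam : 0 < lam) :
    ∫⁻ z, ENNReal.ofReal (expTail lam (Real.log (max 1 (S z)) / lam)) ∂ν =
      ∫⁻ u in Ici 0,
        ENNReal.ofReal (u * Real.exp (-lam * u)) * ν {z | S z ≤ Real.exp (lam * u)} := by
  set f : α → ℝ := fun z => expTail lam (Real.log (max 1 (S z)) / lam)
  have hlevel : ∀ z, 0 ≤ Real.log (max 1 (S z)) / lam := fun z =>
    div_nonneg (Real.log_nonneg (le_max_left _ _)) hlam.le
  have hf_le : ∀ z, f z ≤ 1 / lam ^ 2 := fun z =>
    expTail_zero (lam := lam) ▸ (strictAntiOn_expTail hlam).antitoneOn self_mem_Ici (hlevel z)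
      (hlevel z)
  have hf_meas : Measurable f := by fun_prop
  have hvanish : ∫⁻ t in Ioi (1 / lam ^ 2), ν {z | t ≤ f z} = 0 := by
    refine (setLIntegral_congr_fun measurableSet_Ioi fun t ht => ?_).trans lintegral_zero
    exact measure_mono_null (fun z (hz : t ≤ f z) => ((hf_le z).not_gt (ht.trans_le hz)).elim)
      measure_empty
  rw [lintegral_eq_lintegral_meas_le ν (ae_of_all _ fun z => (expTail_pos hlam (hlevel z)).le)
      hf_meas.aemeasurable, ← Ioc_union_Ioi_eq_Ioi (by positivity : (0 : ℝ) ≤ 1 / lam ^ 2),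
    lintegral_union measurableSet_Ioi Ioc_disjoint_Ioi_same, hvanish, add_zero,
    setLIntegral_Ioc_expTail_eq hlam]
  refine setLIntegral_congr_fun measurableSet_Ici fun u (hu : 0 ≤ u) => ?_
  simp_rw [expTail_le_expTail_log_max_iff hlam hu]

theorem lintegral_Ici_setLIntegral_le_exp_eq (μ : Measure α) {S : α → ℝ} (hS : Measurable S)
    (hlam : 0 < lam) :
    ∫⁻ u in Ici 0, ∫⁻ z in {z | S z ≤ Real.exp (lam * u)},
        ENNReal.ofReal (u * Real.exp (-lam * u) * S z ^ 2) ∂μ =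
      ENNReal.ofReal (1 / lam ^ 2) *
        ((∫⁻ z in {z | S z ≤ 1}, ENNReal.ofReal (S z ^ 2) ∂μ) +
          ∫⁻ z in {z | 1 < S z}, ENNReal.ofReal (S z * (Real.log (S z) + 1)) ∂μ) := by
  have hsub : ∀ r, MeasurableSet {z | S z ≤ r} := fun r => measurableSet_le hS measurable_const
  have hsq : Measurable fun z => ENNReal.ofReal (S z ^ 2) := by fun_prop
  set ν := μ.withDensity fun z => ENNReal.ofReal (S z ^ 2)
  calc ∫⁻ u in Ici 0, ∫⁻ z in {z | S z ≤ Real.exp (lam * u)},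
        ENNReal.ofReal (u * Real.exp (-lam * u) * S z ^ 2) ∂μ
      = ∫⁻ u in Ici 0,
          ENNReal.ofReal (u * Real.exp (-lam * u)) * ν {z | S z ≤ Real.exp (lam * u)} := by
        refine setLIntegral_congr_fun measurableSet_Ici fun u (hu : 0 ≤ u) => ?_
        simp_rw [ν, withDensity_apply _ (hsub _), ← lintegral_const_mul _ hsq,
          ENNReal.ofReal_mul (by positivity : 0 ≤ u * Real.exp (-lam * u))]
    _ = ∫⁻ z, ENNReal.ofReal (S z ^ 2 * expTail lam (Real.log (max 1 (S z)) / lam)) ∂μ := by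
        rw [← lintegral_expTail_log_max_eq ν hS hlam,
          lintegral_withDensity_eq_lintegral_mul _ hsq (by fun_prop)]
        simp_rw [Pi.mul_apply, ENNReal.ofReal_mul (sq_nonneg _)]
    _ = _ := by
        rw [← lintegral_add_compl _ (hsub 1), mul_add, compl_ofPred]
        simp_rw [not_le]
        congr 1
        · rw [← lintegral_const_mul' _ _ ENNReal.ofReal_ne_top]
          refine setLIntegral_congr_fun (hsub 1) fun z (hz : S z ≤ 1) => ?_
          rw [sq_mul_expTail_log_max_of_le_one hz, ENNReal.ofReal_mul (by positivity)]
        · rw [← lintegral_const_mul' _ _ ENNReal.ofReal_ne_top]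
          refine setLIntegral_congr_fun (measurableSet_lt measurable_const hS)
            fun z (hz : 1 < S z) => ?_
          rw [sq_mul_expTail_log_max_of_one_lt hlam.ne' hz, ENNReal.ofReal_mul (by positivity)]

lemma setLIntegral_one_lt_mul_log_add_one (μ : Measure α) {S : α → ℝ} (hS : Measurable S) :
    ∫⁻ z in {z | 1 < S z}, ENNReal.ofReal (S z * (Real.log (S z) + 1)) ∂μ =
      (∫⁻ z in {z | 1 < S z}, ENNReal.ofReal (S z * Real.log (S z)) ∂μ) +
        ∫⁻ z in {z | 1 < S z}, ENNReal.ofReal (S z) ∂μ := by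
  rw [← lintegral_add_left (by fun_prop)]
  refine setLIntegral_congr_fun (measurableSet_lt measurable_const hS) fun z (hz : 1 < S z) => ?_
  rw [mul_add_one, ENNReal.ofReal_add (mul_nonneg (by linarith) (Real.log_nonneg hz.le))
    (by linarith)]

end Measure

theorem weighted_smalljump_integral_eq_general
    {d : ℕ} (μ : Measure (Fin d → ℝ))
    (lam : ℝ) (hlam : 0 < lam) :
    (∫⁻ u in Set.Ici (0 : ℝ),
        ∫⁻ z in {z : Fin d → ℝ | (∑ j, z j) ≤ Real.exp (lam * u)},
          ENNReal.ofReal (u * Real.exp (-lam * u) * (∑ j, z j) ^ 2) ∂μ) =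
      ENNReal.ofReal (1 / lam ^ 2) *
        ((∫⁻ z in {z : Fin d → ℝ | (∑ j, z j) ≤ 1}, ENNReal.ofReal ((∑ j, z j) ^ 2) ∂μ) +
          ∫⁻ z in {z : Fin d → ℝ | 1 < ∑ j, z j},
            ENNReal.ofReal ((∑ j, z j) * (Real.log (∑ j, z j) + 1)) ∂μ) ∧
    (((∫⁻ z in {z : Fin d → ℝ | (∑ j, z j) ≤ 1}, ENNReal.ofReal ((∑ j, z j) ^ 2) ∂μ) < ⊤ ∧
        (∫⁻ z in {z : Fin d → ℝ | 1 < ∑ j, z j},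
          ENNReal.ofReal ((∑ j, z j) * Real.log (∑ j, z j)) ∂μ) < ⊤ ∧
        (∫⁻ z in {z : Fin d → ℝ | 1 < ∑ j, z j}, ENNReal.ofReal (∑ j, z j) ∂μ) < ⊤) →
      (∫⁻ u in Set.Ici (0 : ℝ),
        ∫⁻ z in {z : Fin d → ℝ | (∑ j, z j) ≤ Real.exp (lam * u)},
          ENNReal.ofReal (u * Real.exp (-lam * u) * (∑ j, z j) ^ 2) ∂μ) < ⊤) := by
  have hS : Measurable fun z : Fin d → ℝ => ∑ j, z j := by fun_prop
  have key := lintegral_Ici_setLIntegral_le_exp_eq μ hS hlam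
  refine ⟨key, fun ⟨h_small, h_log, h_large⟩ => ?_⟩
  rw [key, setLIntegral_one_lt_mul_log_add_one μ hS]
  exact ENNReal.mul_lt_top ENNReal.ofReal_lt_top
    (ENNReal.add_lt_top.2 ⟨h_small, ENNReal.add_lt_top.2 ⟨h_log, h_large⟩⟩)

/-- **Weighted small-jump integral computation (Kyprianou–Palau–Ren, proof of Lemma 1).**
For a measure `μ` carried by `ℝ₊^d` and `λ > 0`,
`∫_0^∞ ∫ u e^{-λu} ⟨1,z⟩² 1_{⟨1,z⟩ ≤ e^{λu}} μ(dz) du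
  = (1/λ²)(∫_{⟨1,z⟩ ≤ 1} ⟨1,z⟩² μ(dz) + ∫_{⟨1,z⟩ > 1} ⟨1,z⟩ (ln⟨1,z⟩ + 1) μ(dz))`
in `[0,∞]`. -/
theorem weighted_smalljump_integral_eq
    {d : ℕ} (hd : 0 < d) (μ : Measure (Fin d → ℝ))
    (hμ : μ {z | ¬ ∀ i, 0 ≤ z i} = 0)
    (lam : ℝ) (hlam : 0 < lam) :
    (∫⁻ u in Set.Ici (0 : ℝ),
        ∫⁻ z in {z : Fin d → ℝ | (∑ j, z j) ≤ Real.exp (lam * u)},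
          ENNReal.ofReal (u * Real.exp (-lam * u) * (∑ j, z j) ^ 2) ∂μ) =
      ENNReal.ofReal (1 / lam ^ 2) *
        ((∫⁻ z in {z : Fin d → ℝ | (∑ j, z j) ≤ 1}, ENNReal.ofReal ((∑ j, z j) ^ 2) ∂μ) +
          ∫⁻ z in {z : Fin d → ℝ | 1 < ∑ j, z j},
            ENNReal.ofReal ((∑ j, z j) * (Real.log (∑ j, z j) + 1)) ∂μ) ∧
    (((∫⁻ z in {z : Fin d → ℝ | (∑ j, z j) ≤ 1}, ENNReal.ofReal ((∑ j, z j) ^ 2) ∂μ) < ⊤ ∧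
        (∫⁻ z in {z : Fin d → ℝ | 1 < ∑ j, z j},
          ENNReal.ofReal ((∑ j, z j) * Real.log (∑ j, z j)) ∂μ) < ⊤ ∧
        (∫⁻ z in {z : Fin d → ℝ | 1 < ∑ j, z j}, ENNReal.ofReal (∑ j, z j) ∂μ) < ⊤) →
      (∫⁻ u in Set.Ici (0 : ℝ),
        ∫⁻ z in {z : Fin d → ℝ | (∑ j, z j) ≤ Real.exp (lam * u)},
          ENNReal.ofReal (u * Real.exp (-lam * u) * (∑ j, z j) ^ 2) ∂μ) < ⊤) :=
  weighted_smalljump_integral_eq_general μ lam hlam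
end

section
/- (Interpolation from lattice to continuous times.) Suppose λ₁ > 0. Then for every x ∈ ℝ₊^d and every k ∈ E, ℙ_x-almost surely: lim_{σ→0⁺} limsup_{n→∞} sup_{t ∈ [nσ, (n+1)σ]} e^{−λ₁ t} | ⟨ ( M((n+1)σ − t) − I ) e_k , X_t ⟩ | = 0, where I is the d×d identity matrix. (This follows from the bound |⟨a, X_t⟩| ≤ (‖a‖/min_i φ(i)) ⟨φ, X_t⟩ for a ∈ ℝ^d, the ℙ_x-a.s. convergence — hence boundedness — of W_t = e^{−λ₁ t}⟨φ, X_t⟩, and the continuity of t ↦ M(t) = e^{tBᵀ} at t = 0.) -/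
/-!
Write `G s t := e^{-λ₁ t} |⟨(M(s) - I) e_k, X_t⟩|`. In the lattice-interpolation term, `t` lies in
`[nσ, (n+1)σ]`, so `s = (n+1)σ - t ≤ σ` and `t ≥ nσ → ∞`; it therefore suffices that `G s t → 0`
as `s → 0` and `t → ∞` jointly. Since `X_t ≥ 0` and `φ > 0`, `|⟨a, X_t⟩| ≤ (∑ᵢ |aᵢ| / φᵢ) ⟨φ, X_t⟩`,
so `G s t ≤ (∑ᵢ |((M(s) - I) e_k)ᵢ| / φᵢ) W_t`: the first factor tends to `0` by continuity of
`s ↦ e^{s Bᵀ}`, and the second is eventually bounded because `W_t` converges.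
-/

open MeasureTheory Filter Topology
open scoped NNReal ENNReal

noncomputable section

/-- The Euclidean inner product on `Fin d → ℝ`. -/
def dotp {d : ℕ} (x y : Fin d → ℝ) : ℝ := ∑ i, x i * y i

/-- The branching mechanism `ψ` of a multi-type continuous-state branching process:
`ψ i u = -⟨u, B eᵢ⟩ + cᵢ uᵢ² + ∫ (e^{-⟨u,z⟩} - 1 + ⟨u,z⟩) μᵢ(dz)`. -/
def psi {d : ℕ} (c : Fin d → ℝ) (μ : Fin d → Measure (Fin d → ℝ))
    (B : Matrix (Fin d) (Fin d) ℝ) (i : Fin d) (u : Fin d → ℝ) : ℝ :=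
  -(dotp u fun j => B j i) + c i * u i ^ 2 +
    (∫⁻ z, ENNReal.ofReal (Real.exp (-dotp u z) - 1 + dotp u z) ∂μ i).toReal

open Set

theorem Matrix.continuous_exp_real {m : Type*} [Fintype m] [DecidableEq m] :
    Continuous (NormedSpace.exp : Matrix m m ℝ → Matrix m m ℝ) :=
  open scoped Norms.Operator in NormedSpace.exp_continuous

theorem abs_dotp_le_mul_dotp {d : ℕ} {φ y : Fin d → ℝ} (hφ : ∀ i, 0 < φ i) (hy : ∀ i, 0 ≤ y i)
    (a : Fin d → ℝ) : |dotp a y| ≤ (∑ i, |a i| / φ i) * dotp φ y := by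
  calc |dotp a y| ≤ ∑ i, |a i| * y i := by
        refine (Finset.abs_sum_le_sum_abs _ _).trans_eq ?_
        simp only [abs_mul, abs_of_nonneg (hy _)]
    _ = ∑ i, |a i| / φ i * (φ i * y i) := by
        refine Finset.sum_congr rfl fun i _ => ?_
        field_simp [(hφ i).ne']
    _ ≤ ∑ i, (∑ j, |a j| / φ j) * (φ i * y i) := by
        refine Finset.sum_le_sum fun i _ => mul_le_mul_of_nonneg_right ?_ ?_
        · exact Finset.single_le_sum (f := fun j => |a j| / φ j)
            (fun j _ => div_nonneg (abs_nonneg _) (hφ j).le) (Finset.mem_univ i)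
        · exact mul_nonneg (hφ i).le (hy i)
    _ = (∑ i, |a i| / φ i) * dotp φ y := by rw [dotp, Finset.mul_sum]

theorem ae_forall_mem_of_continuousWithinAt_Ici {ι Ω E : Type*} [TopologicalSpace ι] [LinearOrder ι]
    [OrderTopology ι] [DenselyOrdered ι] [NoMaxOrder ι] [TopologicalSpace.SeparableSpace ι]
    [TopologicalSpace E] {m : MeasurableSpace Ω} {P : Measure Ω} {X : ι → Ω → E} {S : Set E}
    (hS : IsClosed S) (hX : ∀ ω t, ContinuousWithinAt (fun s => X s ω) (Ici t) t)
    (hmem : ∀ t, ∀ᵐ ω ∂P, X t ω ∈ S) : ∀ᵐ ω ∂P, ∀ t, X t ω ∈ S := by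
  obtain ⟨D, hDc, hDd⟩ := TopologicalSpace.exists_countable_dense ι
  filter_upwards [(ae_ball_iff hDc).2 fun t _ => hmem t] with ω hω t
  have ht : t ∈ closure (Ioi t ∩ D) :=
    closure_minimal (hDd.open_subset_closure_inter isOpen_Ioi) isClosed_closure
      (by simp [closure_Ioi])
  rw [← hS.closure_eq]
  exact ((hX ω t).mono (inter_subset_left.trans Ioi_subset_Ici_self)).mem_closure ht
    fun s hs => hω s hs.2

theorem tendsto_mul_abs_dotp_nhds_zero {d : ℕ} {ι κ : Type*} {l₁ : Filter ι} {l₂ : Filter κ}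
    {φ : Fin d → ℝ} (hφ : ∀ i, 0 < φ i) {a : ι → Fin d → ℝ} (ha : Tendsto a l₁ (𝓝 0))
    {r : κ → ℝ} (hr : ∀ t, 0 ≤ r t) {y : κ → Fin d → ℝ} (hy : ∀ t i, 0 ≤ y t i)
    (hbdd : IsBoundedUnder (· ≤ ·) l₂ fun t => r t * dotp φ (y t)) :
    Tendsto (fun p : ι × κ => r p.2 * |dotp (a p.1) (y p.2)|) (l₁ ×ˢ l₂) (𝓝 0) := by
  set h : (Fin d → ℝ) → ℝ := fun b => ∑ i, |b i| / φ i
  have hh : Tendsto (h ∘ a) l₁ (𝓝 0) := by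
    have : Continuous h := by fun_prop
    simpa [h] using (this.tendsto 0).comp ha
  have hW : IsBoundedUnder (· ≤ ·) (l₁ ×ˢ l₂) ((fun x => ‖x‖) ∘ fun p : ι × κ =>
      r p.2 * dotp φ (y p.2)) := by
    obtain ⟨K, hK⟩ := hbdd
    refine ⟨K, (tendsto_snd.eventually (eventually_map.1 hK)).mono fun p hp => ?_⟩
    have : 0 ≤ dotp φ (y p.2) := Finset.sum_nonneg fun i _ => mul_nonneg (hφ i).le (hy _ i)
    simpa [abs_of_nonneg (mul_nonneg (hr p.2) this)] using hp
  refine squeeze_zero (fun p => mul_nonneg (hr _) (abs_nonneg _)) (fun p => ?_)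
    ((hh.comp tendsto_fst).zero_mul_isBoundedUnder_le hW)
  calc r p.2 * |dotp (a p.1) (y p.2)| ≤ r p.2 * (h (a p.1) * dotp φ (y p.2)) :=
        mul_le_mul_of_nonneg_left (abs_dotp_le_mul_dotp hφ (hy _) _) (hr _)
    _ = _ := by simp only [Function.comp]; ring

theorem limsup_iSup_Icc_le {G : ℝ≥0 → ℝ≥0 → ℝ} (hG0 : ∀ s t, 0 ≤ G s t) {ε : ℝ} (hε : 0 ≤ ε)
    {σ T : ℝ≥0} (hσ : 0 < σ) (hGε : ∀ s ≤ σ, ∀ t ≥ T, G s t ≤ ε) :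
    limsup (fun n : ℕ => ⨆ t ∈ Icc ((n : ℝ≥0) * σ) (((n : ℝ≥0) + 1) * σ),
      G (((n : ℝ≥0) + 1) * σ - t) t) atTop ∈ Icc 0 ε := by
  set A : ℕ → ℝ := fun n => ⨆ t ∈ Icc ((n : ℝ≥0) * σ) (((n : ℝ≥0) + 1) * σ),
      G (((n : ℝ≥0) + 1) * σ - t) t
  have hA0 : ∀ n, 0 ≤ A n := fun n => Real.iSup_nonneg fun t => Real.iSup_nonneg fun _ => hG0 _ _
  obtain ⟨N, hN⟩ := exists_nat_ge (T / σ)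
  have hAε : ∀ n ≥ N, A n ≤ ε := by
    intro n hn
    refine Real.iSup_le (fun t => Real.iSup_le (fun ht => hGε _ ?_ _ ?_) hε) hε
    · rw [tsub_le_iff_right, add_mul, one_mul, add_comm σ]
      exact add_le_add_left ht.1 σ
    · calc T = T / σ * σ := (div_mul_cancel₀ _ hσ.ne').symm
        _ ≤ n * σ := by gcongr; exact hN.trans (by exact_mod_cast hn)
        _ ≤ t := ht.1
  have hAε' : ∀ᶠ n in atTop, A n ≤ ε := eventually_atTop.2 ⟨N, hAε⟩
  exact ⟨le_limsup_of_frequently_le (Frequently.of_forall hA0) ⟨ε, hAε'⟩,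
    limsup_le_of_le (isCoboundedUnder_le_of_eventually_le atTop (Eventually.of_forall hA0)) hAε'⟩

theorem tendsto_limsup_iSup_Icc {G : ℝ≥0 → ℝ≥0 → ℝ} (hG0 : ∀ s t, 0 ≤ G s t)
    (hG : Tendsto (fun p : ℝ≥0 × ℝ≥0 => G p.1 p.2) (𝓝 0 ×ˢ atTop) (𝓝 0)) :
    Tendsto (fun σ : ℝ≥0 => limsup (fun n : ℕ => ⨆ t ∈ Icc ((n : ℝ≥0) * σ) (((n : ℝ≥0) + 1) * σ),
      G (((n : ℝ≥0) + 1) * σ - t) t) atTop) (𝓝[>] 0) (𝓝 0) := by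
  rw [Metric.tendsto_nhds]
  intro ε hε
  obtain ⟨pa, hpa, pb, hpb, hp⟩ := eventually_prod_iff.1 (hG.eventually (ge_mem_nhds (half_pos hε)))
  obtain ⟨δ, hδ, hδpa⟩ := NNReal.nhds_zero_basis.eventually_iff.1 hpa
  obtain ⟨T, hT⟩ := eventually_atTop.1 hpb
  filter_upwards [nhdsWithin_le_nhds (gt_mem_nhds hδ), self_mem_nhdsWithin] with σ hσδ hσ
  have hGε : ∀ s ≤ σ, ∀ t ≥ T, G s t ≤ ε / 2 := fun s hs t ht =>
    hp (hδpa (mem_Iio.2 (hs.trans_lt hσδ))) (hT t ht)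
  obtain ⟨h0, hle⟩ := limsup_iSup_Icc_le hG0 (half_pos hε).le hσ hGε
  rw [Real.dist_eq, sub_zero, abs_of_nonneg h0]
  exact hle.trans_lt (half_lt_self hε)

theorem mcsbp_lattice_to_continuous_general
    -- dimension
    {d : ℕ}
    -- branching data: diffusion coefficients, jump measures, linear part
    (B : Matrix (Fin d) (Fin d) ℝ)
    -- the ψ-MCSBP `X` started from `x`, on a filtered probability space
    {Ω : Type*} {m0 : MeasurableSpace Ω} (P : Measure Ω)
    (X : ℝ≥0 → Ω → Fin d → ℝ)
    (hX_rc : ∀ ω (t : ℝ≥0), ContinuousWithinAt (fun s => X s ω) (Set.Ici t) t)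
    (hX_nonneg : ∀ t, ∀ᵐ ω ∂P, ∀ i, 0 ≤ X t ω i)
    -- the first-moment semigroup `M(t) = e^{tBᵀ}`
    (M : ℝ≥0 → Matrix (Fin d) (Fin d) ℝ)
    (hM : ∀ t : ℝ≥0, M t = NormedSpace.exp ((t : ℝ) • B.transpose))
    -- irreducibility and Perron–Frobenius data
    (lam : ℝ) (φ : Fin d → ℝ)
    (hφpos : ∀ i, 0 < φ i)
    -- the additive martingale `W`
    (W : ℝ≥0 → Ω → ℝ) (hW : ∀ t ω, W t ω = Real.exp (-lam * t) * dotp φ (X t ω))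
    (Winf : Ω → ℝ)
    (hWinf : ∀ᵐ ω ∂P, Tendsto (fun t : ℝ≥0 => W t ω) atTop (𝓝 (Winf ω))) :
    ∀ᵐ ω ∂P, ∀ k : Fin d,
      Tendsto (fun σ : ℝ≥0 =>
          Filter.limsup (fun n : ℕ =>
              ⨆ t ∈ Set.Icc ((n : ℝ≥0) * σ) (((n : ℝ≥0) + 1) * σ),
                Real.exp (-lam * (t : ℝ)) *
                  |dotp ((M (((n : ℝ≥0) + 1) * σ - t) - 1).mulVec (Pi.single k 1)) (X t ω)|)
            atTop)
        (𝓝[>] (0 : ℝ≥0)) (𝓝 (0 : ℝ)) := by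
  have hnonneg : ∀ᵐ ω ∂P, ∀ t, X t ω ∈ Ici 0 :=
    ae_forall_mem_of_continuousWithinAt_Ici isClosed_Ici hX_rc hX_nonneg
  filter_upwards [hnonneg, hWinf] with ω hXω hWω k
  have hMk : Tendsto (fun s : ℝ≥0 => (M s - 1).mulVec (Pi.single k 1)) (𝓝 0) (𝓝 0) := by
    have hcont : Continuous fun s : ℝ≥0 => (M s - 1).mulVec (Pi.single k 1) := by
      simp only [hM]
      exact ((Matrix.continuous_exp_real.comp (by fun_prop)).sub continuous_const).matrix_mulVec
        continuous_const
    simpa only [hM, NNReal.coe_zero, zero_smul, NormedSpace.exp_zero, sub_self,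
      Matrix.zero_mulVec] using hcont.tendsto 0
  have hWbdd : IsBoundedUnder (· ≤ ·) atTop fun t : ℝ≥0 =>
      Real.exp (-lam * t) * dotp φ (X t ω) := by
    simpa only [hW] using hWω.isBoundedUnder_le
  exact tendsto_limsup_iSup_Icc
    (G := fun s t => Real.exp (-lam * t) * |dotp ((M s - 1).mulVec (Pi.single k 1)) (X t ω)|)
    (fun _ _ => mul_nonneg (Real.exp_nonneg _) (abs_nonneg _))
    (tendsto_mul_abs_dotp_nhds_zero hφpos hMk (fun _ => Real.exp_nonneg _) hXω hWbdd)

/-- **Interpolation from lattice to continuous times (Kyprianou–Palau–Ren, Section 3.2).**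
If `λ₁ > 0`, then ℙₓ-a.s., for each coordinate `k`,
`lim_{σ→0⁺} limsup_{n→∞} sup_{t ∈ [nσ,(n+1)σ]} e^{-λ₁ t} |⟨(M((n+1)σ-t) - I)e_k, X_t⟩| = 0`. -/
theorem mcsbp_lattice_to_continuous
    -- dimension
    {d : ℕ} (hd : 0 < d)
    -- branching data: diffusion coefficients, jump measures, linear part
    (c : Fin d → ℝ) (hc : ∀ i, 0 ≤ c i)
    (μ : Fin d → Measure (Fin d → ℝ))
    (hμsupp : ∀ i, μ i {z | ¬ ((∀ j, 0 ≤ z j) ∧ z ≠ 0)} = 0)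
    (hμint : ∀ i, (∫⁻ z, ENNReal.ofReal
        (min ‖z‖ (‖z‖ ^ 2) + ∑ j, if j = i then 0 else z j) ∂μ i) < ⊤)
    (B : Matrix (Fin d) (Fin d) ℝ)
    (hB : ∀ i j, i ≠ j → (∫⁻ z, ENNReal.ofReal (z i) ∂μ j) ≤ ENNReal.ofReal (B i j))
    -- the log-Laplace functional `v(t,f)`
    (v : ℝ≥0 → (Fin d → ℝ) → Fin d → ℝ)
    (hv_nonneg : ∀ (f : Fin d → ℝ), (∀ i, 0 ≤ f i) → ∀ t i, 0 ≤ v t f i)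
    (hv_bdd : ∀ (f : Fin d → ℝ) (T : ℝ≥0), ∃ C : ℝ, ∀ t ≤ T, ∀ i, v t f i ≤ C)
    (hv_eq : ∀ (f : Fin d → ℝ), (∀ i, 0 ≤ f i) → ∀ (t : ℝ≥0) (i : Fin d),
      v t f i = f i - ∫ s in (0:ℝ)..(t:ℝ), psi c μ B i (v (Real.toNNReal s) f))
    -- the ψ-MCSBP `X` started from `x`, on a filtered probability space
    {Ω : Type*} {m0 : MeasurableSpace Ω} (P : Measure Ω) [IsProbabilityMeasure P]
    (F : Filtration ℝ≥0 m0)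
    (X : ℝ≥0 → Ω → Fin d → ℝ)
    (hX_adapted : Adapted F X)
    (hX_rc : ∀ ω (t : ℝ≥0), ContinuousWithinAt (fun s => X s ω) (Set.Ici t) t)
    (hX_ll : ∀ ω (t : ℝ≥0), 0 < t → ∃ l, Tendsto (fun s => X s ω) (𝓝[<] t) (𝓝 l))
    (hX_nonneg : ∀ t, ∀ᵐ ω ∂P, ∀ i, 0 ≤ X t ω i)
    (x : Fin d → ℝ) (hx : ∀ i, 0 ≤ x i)
    (hX0 : ∀ᵐ ω ∂P, X 0 ω = x)
    -- Markov property through the Laplace functional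
    (hMarkov : ∀ (t s : ℝ≥0) (f : Fin d → ℝ), (∀ i, 0 ≤ f i) →
      P[(fun ω => Real.exp (-dotp f (X (t + s) ω))) | F t]
        =ᵐ[P] fun ω => Real.exp (-dotp (X t ω) (v s f)))
    -- the first-moment semigroup `M(t) = e^{tBᵀ}`
    (M : ℝ≥0 → Matrix (Fin d) (Fin d) ℝ)
    (hM : ∀ t : ℝ≥0, M t = NormedSpace.exp ((t : ℝ) • B.transpose))
    (hMoment : ∀ (t s : ℝ≥0) (f : Fin d → ℝ),
      P[(fun ω => dotp f (X (t + s) ω)) | F t] =ᵐ[P] fun ω => dotp ((M s).mulVec f) (X t ω))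
    -- irreducibility and Perron–Frobenius data
    (hirr : ∃ t₀ : ℝ≥0, 0 < t₀ ∧ ∀ i j, 0 < M t₀ i j)
    (lam : ℝ) (φ φh : Fin d → ℝ)
    (hφpos : ∀ i, 0 < φ i) (hφhpos : ∀ i, 0 < φh i)
    (hφ : ∀ t : ℝ≥0, (M t).mulVec φ = Real.exp (lam * t) • φ)
    (hφh : ∀ t : ℝ≥0, (M t).transpose.mulVec φh = Real.exp (lam * t) • φh)
    (hnorm1 : dotp φ (fun _ => 1) = 1) (hnorm2 : dotp φ φh = 1)
    -- the additive martingale `W`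
    (W : ℝ≥0 → Ω → ℝ) (hW : ∀ t ω, W t ω = Real.exp (-lam * t) * dotp φ (X t ω))
    (hWmart : Martingale W F P) (hWnonneg : ∀ t, 0 ≤ᵐ[P] W t)
    (Winf : Ω → ℝ)
    (hWinf : ∀ᵐ ω ∂P, Tendsto (fun t : ℝ≥0 => W t ω) atTop (𝓝 (Winf ω)))
    (hsup : 0 < lam) :
    ∀ᵐ ω ∂P, ∀ k : Fin d,
      Tendsto (fun σ : ℝ≥0 =>
          Filter.limsup (fun n : ℕ =>
              ⨆ t ∈ Set.Icc ((n : ℝ≥0) * σ) (((n : ℝ≥0) + 1) * σ),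
                Real.exp (-lam * (t : ℝ)) *
                  |dotp ((M (((n : ℝ≥0) + 1) * σ - t) - 1).mulVec (Pi.single k 1)) (X t ω)|)
            atTop)
        (𝓝[>] (0 : ℝ≥0)) (𝓝 (0 : ℝ)) :=
  mcsbp_lattice_to_continuous_general B (m0 := m0) P X hX_rc hX_nonneg M hM lam φ hφpos W hW Winf
    hWinf
end
end
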